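/- If X, Y, Z are independent Exp(1) random variables and δ ∈ ℝ, then the random variable L = min{X, δ + Y + Z} has probability density l ↦ Q(δ,l), where Q(δ,l) = e^{−l}e^{δ}(l−δ) if l < 0 and δ ≤ l; Q(δ,l) = e^{−l}e^{−(l−δ)}(1 + 2(l−δ)) if l ≥ 0 and δ ≤ l; Q(δ,l) = e^{−l} if l ≥ 0 and δ > l; and Q(δ,l) = 0 otherwise. -/

import Mathlib

/-!
`L > x` exactly when `X > x` and `Y + Z > x - δ`, so by independence the survival function of `L`
is `x ↦ P(X > x) P(Y + Z > x - δ) = e^{-x⁺} (1 + (x-δ)⁺) e^{-(x-δ)⁺}`, the second factor being the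
survival function of the Erlang(2) law of `Y + Z`. This function is continuous and its right
derivative is `-Q(δ, ·)`, so the fundamental theorem of calculus identifies the law of `L` on
every interval `(a, b]`.
-/

open Real MeasureTheory ProbabilityTheory

/-- The density of `min{X, δ+Y+Z}`. -/
noncomputable def Qden (δ l : ℝ) : ℝ :=
  if l < 0 then (if δ ≤ l then exp (-l) * exp δ * (l - δ) else 0)
  else if δ ≤ l then exp (-l) * exp (-(l - δ)) * (1 + 2 * (l - δ))
  else exp (-l)

open Set

theorem ENNReal.one_sub_ofReal_one_sub {t : ℝ} (ht : t ≤ 1) :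
    1 - ENNReal.ofReal (1 - t) = ENNReal.ofReal t := by
  rw [← ENNReal.ofReal_one, ← ENNReal.ofReal_sub _ (sub_nonneg.2 ht)]
  ring_nf

theorem setLIntegral_Ioc_ofReal_eq_sub_of_hasDerivWithinAt {g g' : ℝ → ℝ} {a b : ℝ}
    (hab : a ≤ b) (hcont : ContinuousOn g (Icc a b))
    (hderiv : ∀ x ∈ Ioo a b, HasDerivWithinAt g (g' x) (Ioi x) x)
    (hpos : ∀ x ∈ Ioo a b, 0 ≤ g' x) :
    ∫⁻ x in Ioc a b, ENNReal.ofReal (g' x) = ENNReal.ofReal (g b - g a) := by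
  have hint := intervalIntegral.integrableOn_deriv_right_of_nonneg hcont hderiv hpos
  have hpos_ae : 0 ≤ᵐ[volume.restrict (Ioc a b)] g' :=
    ae_restrict_of_ae_eq_of_ae_restrict Ioo_ae_eq_Ioc
      ((ae_restrict_iff' measurableSet_Ioo).2 (ae_of_all _ hpos))
  rw [← ofReal_integral_eq_lintegral_ofReal hint hpos_ae, ← intervalIntegral.integral_of_le hab,
    intervalIntegral.integral_eq_sub_of_hasDeriv_right_of_le hab hcont hderiv
      ((intervalIntegrable_iff_integrableOn_Ioc_of_le hab).2 hint)]

theorem map_eq_withDensity_of_hasDerivWithinAt_survival {Ω : Type*} [MeasurableSpace Ω]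
    {μ : Measure Ω} [IsFiniteMeasure μ] {L : Ω → ℝ} (hL : Measurable L) {S f : ℝ → ℝ}
    (hS : ∀ x, μ {ω | x < L ω} = ENNReal.ofReal (S x)) (hS_nonneg : ∀ x, 0 ≤ S x)
    (hS_cont : Continuous S) (hS_deriv : ∀ x, HasDerivWithinAt S (-f x) (Ioi x) x)
    (hf : ∀ x, 0 ≤ f x) :
    μ.map L = volume.withDensity fun x => ENNReal.ofReal (f x) := by
  refine Measure.ext_of_Ioc' _ _ (fun a b _ => measure_ne_top _ _) fun a b hab => ?_
  have hpreimage : L ⁻¹' Ioc a b = {ω | a < L ω} \ {ω | b < L ω} := by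
    ext ω; simp
  have hsub : {ω | b < L ω} ⊆ {ω | a < L ω} := fun ω (hω : b < L ω) => hab.trans hω
  rw [Measure.map_apply hL measurableSet_Ioc, withDensity_apply _ measurableSet_Ioc, hpreimage,
    measure_sdiff hsub (measurableSet_lt measurable_const hL).nullMeasurableSet
      (measure_ne_top _ _),
    hS, hS, setLIntegral_Ioc_ofReal_eq_sub_of_hasDerivWithinAt hab.le hS_cont.neg.continuousOn
      (fun x _ => (hS_deriv x).neg.congr_deriv (neg_neg _)) (fun x _ => hf x),
    ← ENNReal.ofReal_sub _ (hS_nonneg b), Pi.neg_apply, Pi.neg_apply, neg_sub_neg]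

lemma hasDerivWithinAt_max_zero (x : ℝ) :
    HasDerivWithinAt (fun y => max y 0) (if 0 ≤ x then 1 else 0) (Ioi x) x := by
  split_ifs with hx
  · exact (hasDerivWithinAt_id x _).congr (fun y hy => max_eq_left (hx.trans (le_of_lt hy)))
      (max_eq_left hx)
  · push Not at hx
    refine (hasDerivAt_const x (0 : ℝ)).hasDerivWithinAt.congr_of_eventuallyEq ?_
      (max_eq_right hx.le)
    filter_upwards [nhdsWithin_le_nhds (Iio_mem_nhds hx)] with y hy
    exact max_eq_right (le_of_lt hy)

noncomputable def expSurvival (x : ℝ) : ℝ := exp (-max x 0)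

noncomputable def erlangTwoSurvival (s : ℝ) : ℝ := (1 + max s 0) * exp (-max s 0)

@[fun_prop]
lemma continuous_expSurvival : Continuous expSurvival := by
  unfold expSurvival; fun_prop

@[fun_prop]
lemma continuous_erlangTwoSurvival : Continuous erlangTwoSurvival := by
  unfold erlangTwoSurvival; fun_prop

lemma expSurvival_pos (x : ℝ) : 0 < expSurvival x := exp_pos _

lemma expSurvival_le_one (x : ℝ) : expSurvival x ≤ 1 :=
  exp_le_one_iff.2 (neg_nonpos.2 (le_max_right x 0))

lemma erlangTwoSurvival_nonneg (s : ℝ) : 0 ≤ erlangTwoSurvival s :=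
  mul_nonneg (by positivity) (exp_pos _).le

lemma erlangTwoSurvival_le_one (s : ℝ) : erlangTwoSurvival s ≤ 1 := by
  have h := mul_le_mul_of_nonneg_right (add_one_le_exp (max s 0)) (exp_pos (-max s 0)).le
  rwa [← exp_add, add_neg_cancel, exp_zero, add_comm] at h

lemma hasDerivWithinAt_expSurvival (x : ℝ) :
    HasDerivWithinAt expSurvival (if 0 ≤ x then -exp (-x) else 0) (Ioi x) x := by
  refine (hasDerivWithinAt_max_zero x).fun_neg.exp.congr_deriv ?_
  split_ifs with hx
  · simp [max_eq_left hx]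
  · simp

lemma hasDerivWithinAt_erlangTwoSurvival (s : ℝ) :
    HasDerivWithinAt erlangTwoSurvival (-(max s 0 * exp (-max s 0))) (Ioi s) s := by
  have hm := hasDerivWithinAt_max_zero s
  refine ((hm.const_add 1).fun_mul hm.fun_neg.exp).congr_deriv ?_
  split_ifs with hs
  · ring
  · simp [max_eq_right (not_le.1 hs).le]

lemma Qden_nonneg (δ l : ℝ) : 0 ≤ Qden δ l := by
  unfold Qden
  split_ifs with hneg hδ hδ'
  · exact mul_nonneg (by positivity) (sub_nonneg.2 hδ)
  · rfl
  · exact mul_nonneg (by positivity) (by linarith)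
  · positivity

lemma hasDerivWithinAt_survival_Qden (δ x : ℝ) :
    HasDerivWithinAt (fun y => expSurvival y * erlangTwoSurvival (y - δ)) (-Qden δ x)
      (Ioi x) x := by
  have hE := hasDerivWithinAt_expSurvival x
  have hG := (hasDerivWithinAt_erlangTwoSurvival (x - δ)).comp x
    ((hasDerivAt_id x).sub_const δ).hasDerivWithinAt (fun y hy => sub_lt_sub_right hy δ)
  refine (hE.fun_mul hG).congr_deriv ?_
  simp only [expSurvival, erlangTwoSurvival, Qden, Function.comp_apply, id, mul_one]
  rcases lt_or_ge x 0 with hx | hx <;> rcases le_or_gt δ x with hδ | hδ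
  · have hexp : exp (-(x - δ)) = exp (-x) * exp δ := by rw [← exp_add]; ring_nf
    simp only [if_pos hx, if_pos hδ, if_neg hx.not_ge, max_eq_right hx.le,
      max_eq_left (sub_nonneg.2 hδ), hexp, neg_zero, exp_zero]
    ring
  · simp only [if_pos hx, if_neg hδ.not_ge, if_neg hx.not_ge, max_eq_right hx.le,
      max_eq_right (sub_nonpos.2 hδ.le)]
    ring
  · simp only [if_neg hx.not_gt, if_pos hδ, if_pos hx, max_eq_left hx,
      max_eq_left (sub_nonneg.2 hδ)]
    ring
  · simp only [if_neg hx.not_gt, if_neg hδ.not_ge, if_pos hx, max_eq_left hx,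
      max_eq_right (sub_nonpos.2 hδ.le)]
    simp

instance isProbabilityMeasure_expMeasure_one : IsProbabilityMeasure (expMeasure 1) :=
  isProbabilityMeasure_expMeasure one_pos

lemma expMeasure_one_Iic (x : ℝ) :
    expMeasure 1 (Iic x) = ENNReal.ofReal (1 - expSurvival x) := by
  rw [← ofReal_cdf, cdf_expMeasure_eq one_pos, expSurvival]
  split_ifs with hx
  · rw [max_eq_left hx, one_mul]
  · rw [max_eq_right (not_le.1 hx).le, neg_zero, exp_zero, sub_self]

lemma expMeasure_one_Ioi (x : ℝ) : expMeasure 1 (Ioi x) = ENNReal.ofReal (expSurvival x) := by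
  rw [← compl_Iic, prob_compl_eq_one_sub measurableSet_Iic, expMeasure_one_Iic,
    ENNReal.one_sub_ofReal_one_sub (expSurvival_le_one x)]

lemma exponentialPDF_one_mul_expMeasure_one_Iic (s y : ℝ) :
    exponentialPDF 1 y * expMeasure 1 (Iic (s - y)) =
      (Icc 0 s).indicator (fun y => ENNReal.ofReal (exp (-y) - exp (-s))) y := by
  rw [exponentialPDF_eq, expMeasure_one_Iic, expSurvival]
  by_cases hy : 0 ≤ y
  · by_cases hys : y ≤ s
    · rw [if_pos hy, indicator_of_mem (mem_Icc.2 ⟨hy, hys⟩), ← ENNReal.ofReal_mul (by positivity),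
        max_eq_left (sub_nonneg.2 hys), one_mul, one_mul, mul_sub, mul_one, ← exp_add]
      ring_nf
    · rw [indicator_of_notMem (fun h => hys h.2), max_eq_right (by linarith), neg_zero, exp_zero,
        sub_self, ENNReal.ofReal_zero, mul_zero]
  · rw [if_neg hy, indicator_of_notMem (fun h => hy h.1), ENNReal.ofReal_zero, zero_mul]

lemma prod_expMeasure_one_add_le (s : ℝ) :
    ((expMeasure 1).prod (expMeasure 1)) {p : ℝ × ℝ | p.1 + p.2 ≤ s} =
      ENNReal.ofReal (1 - erlangTwoSurvival s) := by
  have hslice : ∀ y, Prod.mk y ⁻¹' {p : ℝ × ℝ | p.1 + p.2 ≤ s} = Iic (s - y) := fun y => by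
    ext z; simp [le_sub_iff_add_le']
  rw [Measure.prod_apply (measurableSet_le (by fun_prop) (by fun_prop))]
  simp_rw [hslice]
  have hanti : Antitone fun y => expMeasure 1 (Iic (s - y)) := fun y z hyz =>
    measure_mono (Iic_subset_Iic.2 (by linarith))
  refine (lintegral_withDensity_eq_lintegral_mul volume (f := exponentialPDF 1)
    (measurable_exponentialPDFReal 1).ennreal_ofReal hanti.measurable).trans ?_
  simp only [Pi.mul_apply]
  rw [lintegral_congr fun y => exponentialPDF_one_mul_expMeasure_one_Iic s y,
    lintegral_indicator measurableSet_Icc, ← setLIntegral_congr Ioc_ae_eq_Icc]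
  rcases lt_or_ge s 0 with hs | hs
  · rw [Ioc_eq_empty (not_lt.2 hs.le), Measure.restrict_empty, lintegral_zero_measure,
      erlangTwoSurvival, max_eq_right hs.le]
    simp
  · have hderiv : ∀ y, HasDerivAt (fun y => -exp (-y) - y * exp (-s)) (exp (-y) - exp (-s)) y :=
      fun y => ((hasDerivAt_neg y).exp.fun_neg.fun_sub ((hasDerivAt_id' y).mul_const _)).congr_deriv
        (by ring)
    rw [setLIntegral_Ioc_ofReal_eq_sub_of_hasDerivWithinAt hs (by fun_prop)
      (fun y _ => (hderiv y).hasDerivWithinAt)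
      (fun y hy => sub_nonneg.2 (exp_le_exp.2 (neg_le_neg hy.2.le))), erlangTwoSurvival,
      max_eq_left hs]
    simp only [neg_zero, exp_zero, zero_mul]
    ring_nf

lemma measure_lt_add_of_indepFun_expMeasure {Ω : Type*} [MeasurableSpace Ω] {μ : Measure Ω}
    [IsProbabilityMeasure μ] {Y Z : Ω → ℝ} (hY : Measurable Y) (hZ : Measurable Z)
    (hYZ : IndepFun Y Z μ) (hYe : μ.map Y = expMeasure 1) (hZe : μ.map Z = expMeasure 1)
    (s : ℝ) : μ {ω | s < Y ω + Z ω} = ENNReal.ofReal (erlangTwoSurvival s) := by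
  have hmeas : MeasurableSet {p : ℝ × ℝ | p.1 + p.2 ≤ s} :=
    measurableSet_le (by fun_prop) measurable_const
  have hpreimage : {ω | s < Y ω + Z ω} = (fun ω => (Y ω, Z ω)) ⁻¹' {p | p.1 + p.2 ≤ s}ᶜ := by
    ext ω; simp
  rw [hpreimage, ← Measure.map_apply (hY.prodMk hZ) hmeas.compl,
    (indepFun_iff_map_prod_eq_prod_map_map hY.aemeasurable hZ.aemeasurable).1 hYZ, hYe, hZe,
    prob_compl_eq_one_sub hmeas, prod_expMeasure_one_add_le,
    ENNReal.one_sub_ofReal_one_sub (erlangTwoSurvival_le_one s)]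

/-- If `X`, `Y`, `Z` are independent `Exp(1)` random variables and `δ ∈ ℝ`, then
`L = min{X, δ+Y+Z}` has probability density `l ↦ Q(δ,l)`. -/
theorem density_of_min {Ω : Type*} [MeasurableSpace Ω] (μ : Measure Ω)
    [IsProbabilityMeasure μ] (X Y Z : Ω → ℝ)
    (hX : Measurable X) (hY : Measurable Y) (hZ : Measurable Z)
    (hindep : iIndepFun ![X, Y, Z] μ)
    (hXe : Measure.map X μ = expMeasure 1)
    (hYe : Measure.map Y μ = expMeasure 1)
    (hZe : Measure.map Z μ = expMeasure 1) (δ : ℝ) :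
    Measure.map (fun ω => min (X ω) (δ + Y ω + Z ω)) μ =
      volume.withDensity fun l => ENNReal.ofReal (Qden δ l) := by
  have hmeas : ∀ i, Measurable (![X, Y, Z] i) := fun i => by fin_cases i <;> assumption
  have hYZ : IndepFun Y Z μ := hindep.indepFun (show (1 : Fin 3) ≠ 2 by decide)
  have hXYZ : IndepFun X (Y + Z) μ :=
    hindep.indepFun_add_right hmeas 0 1 2 (by decide) (by decide)
  refine map_eq_withDensity_of_hasDerivWithinAt_survival (by fun_prop)
    (S := fun x => expSurvival x * erlangTwoSurvival (x - δ)) (fun x => ?_)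
    (fun x => mul_nonneg (expSurvival_pos x).le (erlangTwoSurvival_nonneg _)) (by fun_prop)
    (hasDerivWithinAt_survival_Qden δ) (Qden_nonneg δ)
  have hevent : {ω | x < min (X ω) (δ + Y ω + Z ω)} = X ⁻¹' Ioi x ∩ (Y + Z) ⁻¹' Ioi (x - δ) := by
    ext ω; simp [sub_lt_iff_lt_add', add_assoc]
  rw [hevent, hXYZ.measure_inter_preimage_eq_mul _ _ measurableSet_Ioi measurableSet_Ioi,
    ← Measure.map_apply hX measurableSet_Ioi, hXe, expMeasure_one_Ioi,
    ENNReal.ofReal_mul (expSurvival_pos x).le]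
  exact congrArg _ (measure_lt_add_of_indepFun_expMeasure hY hZ hYZ hYe hZe (x - δ))
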